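/- arXiv:2406.08339 — 8 statements merged into one kernel-verified Lean document; each statement's English description precedes it below -/
import Mathlib

section
/- There is a constant c > 0 such that for all ε ∈ (0,1/2), all δ ∈ (0, 63/64) and every u ∈ S₀(ε), the energy restricted to the strip [0,2ε]×[0,1] satisfies E_{ε,δ}(u, [0,2ε]×[0,1]) ≥ c·ε·δ² (Lemma 5.8). -/
open Real Finset

noncomputable section

/-- `Kof ε` is the largest integer `K` with `K * ε < 1`. -/
def Kof (ε : ℝ) : ℤ := ⌈1 / ε⌉ - 1

/-- Index set of the lattice `[0,1)² ∩ εℤ²`. -/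
def Idx (ε : ℝ) : Finset (ℤ × ℤ) :=
  Finset.Icc 0 (Kof ε) ×ˢ Finset.Icc 0 (Kof ε)

/-- Indices `(i,j)` with `i + 2 ≤ K`. -/
def IdxH (ε : ℝ) : Finset (ℤ × ℤ) :=
  Finset.Icc 0 (Kof ε - 2) ×ˢ Finset.Icc 0 (Kof ε)

/-- Indices `(i,j)` with `j + 2 ≤ K`. -/
def IdxV (ε : ℝ) : Finset (ℤ × ℤ) :=
  Finset.Icc 0 (Kof ε) ×ˢ Finset.Icc 0 (Kof ε - 2)

/-- Squared Euclidean norm on `ℝ × ℝ`. -/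
def sqnorm (v : ℝ × ℝ) : ℝ := v.1 ^ 2 + v.2 ^ 2

/-- Euclidean scalar product on `ℝ × ℝ`. -/
def dotp (a b : ℝ × ℝ) : ℝ := a.1 * b.1 + a.2 * b.2

/-- Cross product `a × b = a₁b₂ − a₂b₁`. -/
def crossp (a b : ℝ × ℝ) : ℝ := a.1 * b.2 - a.2 * b.1

/-- sign with convention `sign 0 = -1`. -/
def sgn (x : ℝ) : ℝ := if 0 < x then 1 else -1

/-- A spin field: unit vectors on the lattice. -/
def IsSpin (ε : ℝ) (u : ℤ × ℤ → ℝ × ℝ) : Prop :=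
  ∀ p ∈ Idx ε, sqnorm (u p) = 1

/-- Spin fields with ferromagnetic Dirichlet boundary condition on the left boundary. -/
def InS0 (ε : ℝ) (u : ℤ × ℤ → ℝ × ℝ) : Prop :=
  IsSpin ε u ∧ ∀ j ∈ Finset.Icc (0 : ℤ) (Kof ε), u (0, j) = (0, 1)

/-- Horizontal part of the energy. -/
def Ehor (ε δ : ℝ) (u : ℤ × ℤ → ℝ × ℝ) : ℝ :=
  ε ^ 2 / 2 * ∑ p ∈ IdxH ε,
    sqnorm (u p - (2 * (1 - δ)) • u (p.1 + 1, p.2) + u (p.1 + 2, p.2))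

/-- Vertical part of the energy. -/
def Ever (ε δ : ℝ) (u : ℤ × ℤ → ℝ × ℝ) : ℝ :=
  ε ^ 2 / 2 * ∑ p ∈ IdxV ε,
    sqnorm (u p - (2 * (1 - δ)) • u (p.1, p.2 + 1) + u (p.1, p.2 + 2))

/-- The total energy `E_{ε,δ}`. -/
def E (ε δ : ℝ) (u : ℤ × ℤ → ℝ × ℝ) : ℝ := Ehor ε δ u + Ever ε δ u

/-- The scaling function `s(ε,δ)`. -/
def sfun (ε δ : ℝ) : ℝ :=
  min (δ ^ 2)
    (min (ε * (δ * Real.sqrt δ) * (|Real.log (ε / Real.sqrt δ)| + 1)) (ε * Real.sqrt δ))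

/-- Horizontal angular velocity of a spin field. -/
def thetaH (u : ℤ × ℤ → ℝ × ℝ) (p : ℤ × ℤ) : ℝ :=
  sgn (crossp (u p) (u (p.1 + 1, p.2))) * Real.arccos (dotp (u p) (u (p.1 + 1, p.2)))

/-- Vertical angular velocity of a spin field. -/
def thetaV (u : ℤ × ℤ → ℝ × ℝ) (p : ℤ × ℤ) : ℝ :=
  sgn (crossp (u p) (u (p.1, p.2 + 1))) * Real.arccos (dotp (u p) (u (p.1, p.2 + 1)))

/-- The function `p` of Lemma 3.1. -/
def pfun (θ₁ θ₂ : ℝ) : ℝ :=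
  if θ₁ = θ₂ then 1
  else (Real.sin θ₁ ^ 2 + Real.sin θ₂ ^ 2 - (1 - Real.cos (θ₁ + θ₂))) /
    (2 * (Real.sin (θ₂ / 2) - Real.sin (θ₁ / 2)) ^ 2)

end

/-- Energy restricted to the strip `[0,2ε] × [0,1]`: both sums restricted to base
indices `(i,j)` with `i ≤ 2`. -/
noncomputable def Estrip (ε δ : ℝ) (u : ℤ × ℤ → ℝ × ℝ) : ℝ :=
  ε ^ 2 / 2 * ∑ p ∈ (IdxH ε).filter (fun p => p.1 ≤ 2),
      sqnorm (u p - (2 * (1 - δ)) • u (p.1 + 1, p.2) + u (p.1 + 2, p.2)) +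
  ε ^ 2 / 2 * ∑ p ∈ (IdxV ε).filter (fun p => p.1 ≤ 2),
      sqnorm (u p - (2 * (1 - δ)) • u (p.1, p.2 + 1) + u (p.1, p.2 + 2))

/-!
On the first column the boundary condition forces `u(0,j) = u(0,j+1) = u(0,j+2) = (0,1)`, so each
of the `K - 1` vertical second differences there equals `2δ (0,1)` and contributes `4δ²`. Hence the
strip energy is at least `ε²/2 · (K - 1) · 4δ² = 2δ² ε · ε(K - 1)`, and `ε(K - 1) ≥ 1/3` because
`K ≥ 2` and `K ≥ 1/ε - 1`.
-/

lemma sqnorm_nonneg (v : ℝ × ℝ) : 0 ≤ sqnorm v := by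
  unfold sqnorm; positivity

lemma sqnorm_secondDiff_const (δ : ℝ) (v : ℝ × ℝ) :
    sqnorm (v - (2 * (1 - δ)) • v + v) = 4 * δ ^ 2 * sqnorm v := by
  simp only [sqnorm, Prod.fst_add, Prod.fst_sub, Prod.smul_fst, Prod.snd_add, Prod.snd_sub,
    Prod.smul_snd, smul_eq_mul]
  ring

lemma one_div_sub_one_le_Kof (ε : ℝ) : 1 / ε - 1 ≤ (Kof ε : ℝ) := by
  have := Int.le_ceil (1 / ε)
  unfold Kof; push_cast; linarith

section

variable {ε : ℝ}

lemma two_le_Kof (hε : 0 < ε) (hε2 : ε < 1 / 2) : 2 ≤ Kof ε := by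
  have h : (2 : ℝ) < 1 / ε := by rw [lt_div_iff₀ hε]; linarith
  have := Int.lt_ceil.mpr (by exact_mod_cast h : ((2 : ℤ) : ℝ) < 1 / ε)
  unfold Kof; omega

lemma one_third_le_mul_Kof_sub_one (hε : 0 < ε) (hε2 : ε < 1 / 2) :
    1 / 3 ≤ ε * ((Kof ε : ℝ) - 1) := by
  have hK : (2 : ℝ) ≤ Kof ε := by exact_mod_cast two_le_Kof hε hε2
  have h₁ : ε ≤ ε * ((Kof ε : ℝ) - 1) := by nlinarith
  have h₂ : 1 - 2 * ε ≤ ε * ((Kof ε : ℝ) - 1) :=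
    calc 1 - 2 * ε = ε * (1 / ε - 1 - 1) := by field_simp; ring
      _ ≤ ε * ((Kof ε : ℝ) - 1) := by gcongr; linarith [one_div_sub_one_le_Kof ε]
  linarith

lemma column_zero_le_vertical_strip_sum (δ : ℝ) (u : ℤ × ℤ → ℝ × ℝ) (v : ℝ × ℝ)
    (hK : 1 ≤ Kof ε) (hbd : ∀ j ∈ Icc (0 : ℤ) (Kof ε), u (0, j) = v) :
    ((Kof ε : ℝ) - 1) * (4 * δ ^ 2 * sqnorm v) ≤
      ∑ p ∈ (IdxV ε).filter (fun p => p.1 ≤ 2),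
        sqnorm (u p - (2 * (1 - δ)) • u (p.1, p.2 + 1) + u (p.1, p.2 + 2)) := by
  set S : Finset (ℤ × ℤ) := {(0 : ℤ)} ×ˢ Icc 0 (Kof ε - 2)
  have hsub : S ⊆ (IdxV ε).filter (fun p => p.1 ≤ 2) := by
    intro p hp
    simp only [S, mem_product, mem_singleton, mem_Icc] at hp
    simp only [mem_filter, IdxV, mem_product, mem_Icc]
    omega
  have hterm : ∀ p ∈ S, sqnorm (u p - (2 * (1 - δ)) • u (p.1, p.2 + 1) + u (p.1, p.2 + 2))
      = 4 * δ ^ 2 * sqnorm v := by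
    rintro ⟨i, j⟩ hp
    simp only [S, mem_product, mem_singleton, mem_Icc] at hp
    obtain ⟨rfl, hj₀, hj⟩ := hp
    rw [hbd j (mem_Icc.mpr ⟨hj₀, by omega⟩), hbd (j + 1) (mem_Icc.mpr ⟨by omega, by omega⟩),
      hbd (j + 2) (mem_Icc.mpr ⟨by omega, by omega⟩), sqnorm_secondDiff_const]
  have hcard : (#S : ℝ) = (Kof ε : ℝ) - 1 := by
    have : (Kof ε - 2 + 1 - 0).toNat = (Kof ε - 1).toNat := by omega
    simp only [S, card_product, card_singleton, one_mul, Int.card_Icc, this]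
    rw [← Int.cast_natCast (R := ℝ), Int.toNat_of_nonneg (by omega)]
    push_cast; ring
  calc ((Kof ε : ℝ) - 1) * (4 * δ ^ 2 * sqnorm v)
      = ∑ p ∈ S, sqnorm (u p - (2 * (1 - δ)) • u (p.1, p.2 + 1) + u (p.1, p.2 + 2)) := by
        rw [sum_congr rfl hterm, sum_const, nsmul_eq_mul, hcard]
    _ ≤ _ := sum_le_sum_of_subset_of_nonneg hsub fun p _ _ => sqnorm_nonneg _

end

/-- Lemma 5.8: lower bound on the boundary strip for `δ` bounded away from `1`. -/
theorem strip_lower_bound_intermediate_delta :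
    ∃ c : ℝ, 0 < c ∧ ∀ ε δ : ℝ, ε ∈ Set.Ioo (0 : ℝ) (1 / 2) →
      δ ∈ Set.Ioo (0 : ℝ) (63 / 64) →
      ∀ u : ℤ × ℤ → ℝ × ℝ, InS0 ε u → c * (ε * δ ^ 2) ≤ Estrip ε δ u := by
  refine ⟨2 / 3, by norm_num, ?_⟩
  rintro ε δ ⟨hε, hε2⟩ - u ⟨-, hbd⟩
  have hV := column_zero_le_vertical_strip_sum δ u (0, 1)
    (by linarith [two_le_Kof hε hε2]) hbd
  have hH := sum_nonneg fun p (_ : p ∈ (IdxH ε).filter (fun p => p.1 ≤ 2)) =>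
    sqnorm_nonneg (u p - (2 * (1 - δ)) • u (p.1 + 1, p.2) + u (p.1 + 2, p.2))
  have hεK := one_third_le_mul_Kof_sub_one hε hε2
  rw [show sqnorm (0, 1) = 1 by norm_num [sqnorm], mul_one] at hV
  unfold Estrip
  calc 2 / 3 * (ε * δ ^ 2) ≤ 2 * ε * δ ^ 2 * (ε * ((Kof ε : ℝ) - 1)) := by
        nlinarith [show 0 ≤ ε * δ ^ 2 by positivity]
    _ = ε ^ 2 / 2 * (((Kof ε : ℝ) - 1) * (4 * δ ^ 2)) := by ring
    _ ≤ _ := by nlinarith [show 0 ≤ ε ^ 2 / 2 by positivity]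
end

section
/- Let ε ∈ (0,1/2), δ ∈ (0,1), u any spin field with horizontal angular velocities θ^{hor}, and β ∈ (2·arccos(1−δ), π). Set A_β := {(i,j) ∈ I : i+1 ≤ K and |θ^{hor}_{i,j}| ≥ β}. Then ε² · #A_β ≤ 2·E^{hor}_{ε,δ}(u) / ((1−δ)²·(1−δ−cos β)²), where #A_β denotes the number of elements of A_β (Lemma 3.3, horizontal version). -/
open Real Finset

lemma cs (v w : ℝ × ℝ) : (dotp v w) ^ 2 ≤ sqnorm v * sqnorm w := by
  simp only [dotp, sqnorm]
  nlinarith [sq_nonneg (v.1 * w.2 - v.2 * w.1)]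

lemma expandT (l : ℝ) (a b c : ℝ × ℝ) (ha : sqnorm a = 1) (hb : sqnorm b = 1) (hc : sqnorm c = 1) :
    sqnorm (a - (2 * l) • b + c)
      = 2 + 4 * l ^ 2 - 4 * l * dotp a b - 4 * l * dotp b c + 2 * dotp a c := by
  simp only [sqnorm, dotp, Prod.fst_add, Prod.snd_add, Prod.fst_sub, Prod.snd_sub,
    Prod.smul_fst, Prod.smul_snd, smul_eq_mul] at *
  linear_combination ha + 4 * l ^ 2 * hb + hc

lemma scalar_key (l cb d1 d2 d3 : ℝ)
    (hcs : (2 * l * d2 - d3) ^ 2 ≤ 4 * l ^ 2 - 4 * l * d1 + 1)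
    (hl0 : 0 < l) (hl1 : l ≤ 1) (hcb : -1 ≤ cb) (hcbl : cb < l) (hbad : d1 ≤ cb) :
    l ^ 2 * (l - cb) ^ 2 ≤ 2 + 4 * l ^ 2 - 4 * l * d1 - 4 * l * d2 + 2 * d3 := by
  set x := l * (l - cb) with hx
  set e := 2 * l * d2 - d3 with he
  set Q := 4 * l ^ 2 - 4 * l * d1 + 1 with hQdef
  have hx0 : 0 < x := mul_pos hl0 (by linarith)
  have hx2 : x ≤ 2 := by nlinarith
  have hQ : (1 + x) ^ 2 ≤ Q := by nlinarith
  have hgoal : x ^ 2 ≤ 1 + Q - 2 * e := by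
    nlinarith [sq_nonneg (e - 1 - x), mul_nonneg hx0.le (sub_nonneg.2 hcs),
      mul_nonneg hx0.le (sub_nonneg.2 hQ)]
  have : l ^ 2 * (l - cb) ^ 2 = x ^ 2 := by rw [hx]; ring
  rw [this]; linarith [hgoal]

lemma csQ (l : ℝ) (a b c : ℝ × ℝ) (ha : sqnorm a = 1) (hb : sqnorm b = 1) (hc : sqnorm c = 1) :
    (2 * l * dotp b c - dotp a c) ^ 2 ≤ 4 * l ^ 2 - 4 * l * dotp a b + 1 := by
  have h := cs ((2 * l) • b - a) c
  have h1 : dotp ((2 * l) • b - a) c = 2 * l * dotp b c - dotp a c := by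
    simp only [dotp, Prod.fst_sub, Prod.snd_sub, Prod.smul_fst, Prod.smul_snd, smul_eq_mul]; ring
  have h2 : sqnorm ((2 * l) • b - a) = 4 * l ^ 2 - 4 * l * dotp a b + 1 := by
    simp only [sqnorm, dotp, Prod.fst_sub, Prod.snd_sub, Prod.smul_fst, Prod.smul_snd,
      smul_eq_mul] at *
    linear_combination 4 * l ^ 2 * hb + ha
  rw [h1, h2, hc, mul_one] at h
  exact h

lemma key_one (l cb : ℝ) (a b c : ℝ × ℝ) (ha : sqnorm a = 1) (hb : sqnorm b = 1)
    (hc : sqnorm c = 1) (hl0 : 0 < l) (hl1 : l ≤ 1) (hcb : -1 ≤ cb) (hcbl : cb < l)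
    (hbad : dotp a b ≤ cb ∨ dotp b c ≤ cb) :
    l ^ 2 * (l - cb) ^ 2 ≤ sqnorm (a - (2 * l) • b + c) := by
  rw [expandT l a b c ha hb hc]
  rcases hbad with hbad | hbad
  · exact scalar_key l cb _ _ _ (csQ l a b c ha hb hc) hl0 hl1 hcb hcbl hbad
  · have h := scalar_key l cb _ _ _ (csQ l c b a hc hb ha) hl0 hl1 hcb hcbl
      (by simpa [dotp, mul_comm] using hbad)
    have e1 : dotp c b = dotp b c := by simp [dotp]; ring
    have e2 : dotp b a = dotp a b := by simp [dotp]; ring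
    have e3 : dotp c a = dotp a c := by simp [dotp]; ring
    rw [e1, e2, e3] at h
    linarith

lemma key_two (l cb : ℝ) (a b c : ℝ × ℝ) (ha : sqnorm a = 1) (hb : sqnorm b = 1)
    (hc : sqnorm c = 1) (hl0 : 0 < l) (hl1 : l ≤ 1) (hcbl : cb < l)
    (h1 : dotp a b ≤ cb) (h2 : dotp b c ≤ cb) :
    2 * (l ^ 2 * (l - cb) ^ 2) ≤ sqnorm (a - (2 * l) • b + c) := by
  have hproj := cs (a - (2 * l) • b + c) b
  have hd : dotp (a - (2 * l) • b + c) b = dotp a b + dotp b c - 2 * l := by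
    simp only [dotp, sqnorm, Prod.fst_add, Prod.snd_add, Prod.fst_sub, Prod.snd_sub,
      Prod.smul_fst, Prod.smul_snd, smul_eq_mul] at *
    linear_combination -2 * l * hb
  rw [hd, hb, mul_one] at hproj
  have : (2 * l - 2 * cb) ^ 2 ≤ (dotp a b + dotp b c - 2 * l) ^ 2 := by
    have hneg : dotp a b + dotp b c - 2 * l ≤ -(2 * l - 2 * cb) := by linarith
    have h0 : 0 ≤ 2 * l - 2 * cb := by linarith
    nlinarith
  have hl2 : 0 ≤ (1 - l ^ 2) * (l - cb) ^ 2 :=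
    mul_nonneg (by nlinarith) (sq_nonneg _)
  nlinarith

/-- Lemma 3.3 (horizontal version): the number of large horizontal angular velocities is
controlled by the horizontal energy. -/
theorem count_large_angles_le_energy (ε δ β : ℝ) (u : ℤ × ℤ → ℝ × ℝ)
    (hε : ε ∈ Set.Ioo (0 : ℝ) (1 / 2)) (hδ : δ ∈ Set.Ioo (0 : ℝ) 1)
    (hu : IsSpin ε u)
    (hβ : β ∈ Set.Ioo (2 * Real.arccos (1 - δ)) π) :
    ε ^ 2 * (((Finset.Icc 0 (Kof ε - 1) ×ˢ Finset.Icc 0 (Kof ε)).filter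
        (fun p => β ≤ |thetaH u p|)).card : ℝ)
      ≤ 2 * Ehor ε δ u / ((1 - δ) ^ 2 * (1 - δ - Real.cos β) ^ 2) := by
  obtain ⟨hε0, hε2⟩ := hε
  obtain ⟨hδ0, hδ1⟩ := hδ
  obtain ⟨hβl, hβu⟩ := hβ
  have hl0 : (0:ℝ) < 1 - δ := by linarith
  have hl1 : (1:ℝ) - δ ≤ 1 := by linarith
  have harc0 : 0 ≤ Real.arccos (1 - δ) := Real.arccos_nonneg _
  have hβ0 : 0 < β := by linarith
  have harc2 : Real.arccos (1 - δ) ≤ π / 2 := Real.arccos_le_pi_div_two.2 (by linarith)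
  have hcoslt : Real.cos β < 1 - δ := by
    have h := Real.strictAntiOn_cos
      (Set.mem_Icc.2 ⟨by linarith, by linarith⟩)
      (Set.mem_Icc.2 ⟨hβ0.le, hβu.le⟩) hβl
    rw [Real.cos_two_mul, Real.cos_arccos (by linarith) (by linarith)] at h
    nlinarith
  have hcosm1 : -1 ≤ Real.cos β := Real.neg_one_le_cos β
  have hK2 : 2 ≤ Kof ε := by
    have h2 : (2:ℝ) < 1 / ε := by rw [lt_div_iff₀ hε0]; linarith
    have h3 : (2:ℤ) < ⌈1/ε⌉ := Int.lt_ceil.2 (by exact_mod_cast h2)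
    unfold Kof; omega
  have hD0 : 0 < (1 - δ) ^ 2 * (1 - δ - Real.cos β) ^ 2 :=
    mul_pos (pow_pos hl0 2) (pow_pos (by linarith) 2)
  have hunit : ∀ q : ℤ × ℤ, 0 ≤ q.1 → q.1 ≤ Kof ε → 0 ≤ q.2 → q.2 ≤ Kof ε →
      sqnorm (u q) = 1 := by
    intro q h1 h2 h3 h4
    exact hu q (by simp only [Idx, Finset.mem_product, Finset.mem_Icc]; omega)
  set A := (Finset.Icc 0 (Kof ε - 1) ×ˢ Finset.Icc 0 (Kof ε)).filter
      (fun p => β ≤ |thetaH u p|) with hA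
  have hbadA : ∀ p ∈ A, dotp (u p) (u (p.1 + 1, p.2)) ≤ Real.cos β := by
    intro p hp
    rw [hA, Finset.mem_filter] at hp
    obtain ⟨hpI, hpθ⟩ := hp
    rw [Finset.mem_product, Finset.mem_Icc, Finset.mem_Icc] at hpI
    have hup : sqnorm (u p) = 1 := hunit p hpI.1.1 (by omega) hpI.2.1 hpI.2.2
    have hup1 : sqnorm (u (p.1 + 1, p.2)) = 1 :=
      hunit (p.1 + 1, p.2) (show (0:ℤ) ≤ p.1 + 1 by omega)
        (show p.1 + 1 ≤ Kof ε by omega) hpI.2.1 hpI.2.2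
    have hd2 : (dotp (u p) (u (p.1 + 1, p.2))) ^ 2 ≤ 1 := by
      have h := cs (u p) (u (p.1 + 1, p.2)); rw [hup, hup1, mul_one] at h; exact h
    have hdm1 : -1 ≤ dotp (u p) (u (p.1 + 1, p.2)) := by nlinarith
    have hd1 : dotp (u p) (u (p.1 + 1, p.2)) ≤ 1 := by nlinarith
    have habs : |thetaH u p| = Real.arccos (dotp (u p) (u (p.1 + 1, p.2))) := by
      unfold thetaH sgn
      split_ifs <;> simp [abs_mul, abs_of_nonneg (Real.arccos_nonneg _)]
    rw [habs] at hpθ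
    have hcc := Real.cos_le_cos_of_nonneg_of_le_pi hβ0.le (Real.arccos_le_pi _) hpθ
    rwa [Real.cos_arccos hdm1 hd1] at hcc
  set g : ℤ × ℤ → ℤ × ℤ := fun p => if p.1 ≤ Kof ε - 2 then p else (p.1 - 1, p.2) with hg
  have hmap : ∀ p ∈ A, g p ∈ IdxH ε := by
    intro p hp
    rw [hA, Finset.mem_filter] at hp
    have hpI := hp.1
    rw [Finset.mem_product, Finset.mem_Icc, Finset.mem_Icc] at hpI
    rw [hg]
    simp only [IdxH, Finset.mem_product, Finset.mem_Icc]
    split_ifs with h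
    · exact ⟨⟨hpI.1.1, h⟩, hpI.2⟩
    · exact ⟨⟨by simp; omega, by simp; omega⟩, ⟨by simp; omega, by simp; omega⟩⟩
  have hcount : (A.card : ℝ) * ((1 - δ) ^ 2 * (1 - δ - Real.cos β) ^ 2)
      ≤ ∑ t ∈ IdxH ε, sqnorm (u t - (2 * (1 - δ)) • u (t.1 + 1, t.2) + u (t.1 + 2, t.2)) := by
    rw [Finset.card_eq_sum_card_fiberwise hmap]
    push_cast
    rw [Finset.sum_mul]
    apply Finset.sum_le_sum
    intro t ht
    rw [IdxH, Finset.mem_product, Finset.mem_Icc, Finset.mem_Icc] at ht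
    have hu0 : sqnorm (u t) = 1 := hunit t ht.1.1 (by omega) ht.2.1 ht.2.2
    have hu1 : sqnorm (u (t.1 + 1, t.2)) = 1 :=
      hunit (t.1 + 1, t.2) (show (0:ℤ) ≤ t.1 + 1 by omega)
        (show t.1 + 1 ≤ Kof ε by omega) ht.2.1 ht.2.2
    have hu2 : sqnorm (u (t.1 + 2, t.2)) = 1 :=
      hunit (t.1 + 2, t.2) (show (0:ℤ) ≤ t.1 + 2 by omega)
        (show t.1 + 2 ≤ Kof ε by omega) ht.2.1 ht.2.2
    have hsub : ∀ p ∈ A.filter (fun p => g p = t), p = t ∨ p = (t.1 + 1, t.2) := by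
      intro p hp
      rw [Finset.mem_filter] at hp
      obtain ⟨hpA, hgp⟩ := hp
      rw [hg] at hgp
      by_cases h : p.1 ≤ Kof ε - 2
      · left; simpa [h] using hgp
      · right
        replace hgp : (if p.1 ≤ Kof ε - 2 then p else (p.1 - 1, p.2)) = t := hgp
        rw [if_neg h] at hgp
        have h1 := (Prod.ext_iff.1 hgp).1
        have h2 := (Prod.ext_iff.1 hgp).2
        simp only [] at h1 h2
        exact Prod.ext_iff.2 ⟨by simp only []; omega, by simpa using h2⟩
    have hbond1 : t ∈ A.filter (fun p => g p = t) →
        dotp (u t) (u (t.1 + 1, t.2)) ≤ Real.cos β :=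
      fun h => hbadA t (Finset.mem_filter.1 h).1
    have hbond2 : (t.1 + 1, t.2) ∈ A.filter (fun p => g p = t) →
        dotp (u (t.1 + 1, t.2)) (u (t.1 + 2, t.2)) ≤ Real.cos β := by
      intro h
      have hb := hbadA (t.1 + 1, t.2) (Finset.mem_filter.1 h).1
      have e : ((t.1 + 1 : ℤ)) + 1 = t.1 + 2 := by ring
      simpa [e] using hb
    by_cases h1 : t ∈ A.filter (fun p => g p = t) <;>
      by_cases h2 : (t.1 + 1, t.2) ∈ A.filter (fun p => g p = t)
    · -- both bonds bad
      have hcard : (A.filter (fun p => g p = t)).card ≤ 2 := by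
        have hss : A.filter (fun p => g p = t) ⊆ {t, (t.1 + 1, t.2)} := by
          intro p hp
          rcases hsub p hp with rfl | rfl <;> simp
        calc (A.filter (fun p => g p = t)).card ≤ ({t, (t.1 + 1, t.2)} : Finset (ℤ × ℤ)).card :=
              Finset.card_le_card hss
          _ ≤ 2 := by
              apply le_trans (Finset.card_insert_le _ _); simp
      have hkey := key_two (1 - δ) (Real.cos β) (u t) (u (t.1 + 1, t.2)) (u (t.1 + 2, t.2))
        hu0 hu1 hu2 hl0 hl1 hcoslt (hbond1 h1) (hbond2 h2)
      have hc : ((A.filter (fun p => g p = t)).card : ℝ) ≤ 2 := by exact_mod_cast hcard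
      have hmm := mul_le_mul_of_nonneg_right hc hD0.le
      linarith
    · -- only first bond
      have hcard : (A.filter (fun p => g p = t)).card ≤ 1 := by
        have hss : A.filter (fun p => g p = t) ⊆ {t} := by
          intro p hp
          rcases hsub p hp with rfl | rfl
          · simp
          · exact absurd hp h2
        calc (A.filter (fun p => g p = t)).card ≤ ({t} : Finset (ℤ × ℤ)).card :=
              Finset.card_le_card hss
          _ = 1 := Finset.card_singleton _
      have hkey := key_one (1 - δ) (Real.cos β) (u t) (u (t.1 + 1, t.2)) (u (t.1 + 2, t.2))
        hu0 hu1 hu2 hl0 hl1 hcosm1 hcoslt (Or.inl (hbond1 h1))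
      have hc : ((A.filter (fun p => g p = t)).card : ℝ) ≤ 1 := by exact_mod_cast hcard
      have hmm := mul_le_mul_of_nonneg_right hc hD0.le
      linarith
    · -- only second bond
      have hcard : (A.filter (fun p => g p = t)).card ≤ 1 := by
        have hss : A.filter (fun p => g p = t) ⊆ {(t.1 + 1, t.2)} := by
          intro p hp
          rcases hsub p hp with rfl | rfl
          · exact absurd hp h1
          · simp
        calc (A.filter (fun p => g p = t)).card ≤ ({(t.1 + 1, t.2)} : Finset (ℤ × ℤ)).card :=
              Finset.card_le_card hss
          _ = 1 := Finset.card_singleton _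
      have hkey := key_one (1 - δ) (Real.cos β) (u t) (u (t.1 + 1, t.2)) (u (t.1 + 2, t.2))
        hu0 hu1 hu2 hl0 hl1 hcosm1 hcoslt (Or.inr (hbond2 h2))
      have hc : ((A.filter (fun p => g p = t)).card : ℝ) ≤ 1 := by exact_mod_cast hcard
      have hmm := mul_le_mul_of_nonneg_right hc hD0.le
      linarith
    · -- empty fiber
      have hempty : A.filter (fun p => g p = t) = ∅ := by
        apply Finset.eq_empty_of_forall_notMem
        intro p hp
        rcases hsub p hp with rfl | rfl
        · exact h1 hp
        · exact h2 hp
      rw [hempty]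
      simpa using sqnorm_nonneg (u t - (2 * (1 - δ)) • u (t.1 + 1, t.2) + u (t.1 + 2, t.2))
  have hE : Ehor ε δ u = ε ^ 2 / 2 *
      ∑ t ∈ IdxH ε, sqnorm (u t - (2 * (1 - δ)) • u (t.1 + 1, t.2) + u (t.1 + 2, t.2)) := rfl
  rw [le_div_iff₀ hD0, hE]
  calc ε ^ 2 * (A.card : ℝ) * ((1 - δ) ^ 2 * (1 - δ - Real.cos β) ^ 2)
      = ε ^ 2 * ((A.card : ℝ) * ((1 - δ) ^ 2 * (1 - δ - Real.cos β) ^ 2)) := by ring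
    _ ≤ ε ^ 2 * ∑ t ∈ IdxH ε,
          sqnorm (u t - (2 * (1 - δ)) • u (t.1 + 1, t.2) + u (t.1 + 2, t.2)) :=
        mul_le_mul_of_nonneg_left hcount (sq_nonneg ε)
    _ = 2 * (ε ^ 2 / 2 * ∑ t ∈ IdxH ε,
          sqnorm (u t - (2 * (1 - δ)) • u (t.1 + 1, t.2) + u (t.1 + 2, t.2))) := by ring
end

section
/- For every ε ∈ (0,1/2), every δ ∈ (0,1/2) and every spin field u, the set V of vortices of u satisfies ε² · #V ≤ 64 · E_{ε,δ}(u), where #V denotes the number of elements of V (Remark 3.4). -/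
open Real Finset

/-- The set of vortices of a spin field. -/
noncomputable def Vortices (ε : ℝ) (u : ℤ × ℤ → ℝ × ℝ) : Finset (ℤ × ℤ) :=
  (Finset.Icc 0 (Kof ε - 2) ×ˢ Finset.Icc 0 (Kof ε - 2)).filter
    (fun p => |thetaV u (p.1 + 1, p.2) - thetaV u p - thetaH u (p.1, p.2 + 1) + thetaH u p|
      = 2 * π)

lemma key_energy {δ : ℝ} (hδ1 : δ < 1/2) (hδ0 : 0 < δ) {a b d : ℝ × ℝ}
    (ha : sqnorm a = 1) (hb : sqnorm b = 1) (hd : sqnorm d = 1)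
    (hab : dotp a b ≤ 0) : 1/8 ≤ sqnorm (a - (2*(1-δ)) • b + d) := by
  set c : ℝ := 2*(1-δ) with hc
  have hc1 : 1 < c := by simp only [hc]; linarith
  obtain ⟨a1, a2⟩ := a; obtain ⟨b1, b2⟩ := b; obtain ⟨d1, d2⟩ := d
  simp only [sqnorm, dotp, Prod.mk_add_mk, Prod.mk_sub_mk, Prod.smul_mk, smul_eq_mul] at *
  set v1 : ℝ := a1 - c * b1 with hv1
  set v2 : ℝ := a2 - c * b2 with hv2
  have hs : 2 ≤ v1^2 + v2^2 := by
    have : v1^2 + v2^2 = (a1^2+a2^2) + c^2*(b1^2+b2^2) - 2*c*(a1*b1+a2*b2) := by ring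
    nlinarith [mul_nonpos_of_nonneg_of_nonpos (by linarith : (0:ℝ) ≤ 2*c) hab]
  set t : ℝ := Real.sqrt (v1^2 + v2^2) with ht
  have ht0 : 0 ≤ t := Real.sqrt_nonneg _
  have ht2 : t^2 = v1^2 + v2^2 := Real.sq_sqrt (by positivity)
  have hcs : (v1*d1 + v2*d2)^2 ≤ (v1^2+v2^2) * (d1^2+d2^2) := by
    nlinarith [sq_nonneg (v1*d2 - v2*d1)]
  have hX : -t ≤ v1*d1 + v2*d2 := by
    have h1 : |v1*d1 + v2*d2| ≤ t := by
      rw [← Real.sqrt_sq_eq_abs]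
      apply Real.sqrt_le_sqrt
      nlinarith
    linarith [neg_abs_le (v1*d1 + v2*d2)]
  have hexp : (a1 - c*b1 + d1)^2 + (a2 - c*b2 + d2)^2
      = (v1^2 + v2^2) + 2*(v1*d1+v2*d2) + (d1^2+d2^2) := by
    simp only [hv1, hv2]; ring
  rw [hexp, hd]
  nlinarith [sq_nonneg (t - 3/2)]

lemma sgn_abs (x : ℝ) : |sgn x| = 1 := by
  unfold sgn; split <;> simp

lemma abs_theta_lt {x y : ℝ} (hy : 0 < y) : |sgn x * Real.arccos y| < π/2 := by
  rw [abs_mul, sgn_abs, one_mul, abs_of_nonneg (Real.arccos_nonneg y)]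
  exact Real.arccos_lt_pi_div_two.mpr hy

lemma vortex_bounds {ε : ℝ} {u : ℤ × ℤ → ℝ × ℝ} {p : ℤ × ℤ} (hp : p ∈ Vortices ε u) :
    0 ≤ p.1 ∧ p.1 ≤ Kof ε - 2 ∧ 0 ≤ p.2 ∧ p.2 ≤ Kof ε - 2 := by
  simp only [Vortices, Finset.mem_filter, Finset.mem_product, Finset.mem_Icc] at hp
  tauto

lemma vortex_dot {ε : ℝ} {u : ℤ × ℤ → ℝ × ℝ} {p : ℤ × ℤ} (hp : p ∈ Vortices ε u) :
    dotp (u p) (u (p.1, p.2+1)) ≤ 0 ∨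
    dotp (u (p.1+1, p.2)) (u (p.1+1, p.2+1)) ≤ 0 ∨
    dotp (u p) (u (p.1+1, p.2)) ≤ 0 ∨
    dotp (u (p.1, p.2+1)) (u (p.1+1, p.2+1)) ≤ 0 := by
  by_contra hcon
  push_neg at hcon
  obtain ⟨h1, h2, h3, h4⟩ := hcon
  simp only [Vortices, Finset.mem_filter] at hp
  obtain ⟨-, habs⟩ := hp
  have e1 : |thetaV u (p.1+1, p.2)| < π/2 := abs_theta_lt h2
  have e2 : |thetaV u p| < π/2 := abs_theta_lt h1
  have e3 : |thetaH u (p.1, p.2+1)| < π/2 := abs_theta_lt h4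
  have e4 : |thetaH u p| < π/2 := abs_theta_lt h3
  rw [abs_lt] at e1 e2 e3 e4
  have hlt : |thetaV u (p.1 + 1, p.2) - thetaV u p - thetaH u (p.1, p.2 + 1) + thetaH u p|
      < 2 * π := by
    rw [abs_lt]
    constructor <;> [linarith [e1.1, e2.2, e3.2, e4.1]; linarith [e1.2, e2.1, e3.1, e4.2]]
  rw [habs] at hlt
  exact lt_irrefl _ hlt

/-- the triple charged by a vortex: a triple (in `IdxV` if the flag is `false`, in `IdxH`
if it is `true`) whose first bond has nonpositive scalar product. -/
noncomputable def badBond (u : ℤ × ℤ → ℝ × ℝ) (p : ℤ × ℤ) : Bool × ℤ × ℤ :=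
  if dotp (u p) (u (p.1, p.2+1)) ≤ 0 then (false, p)
  else if dotp (u (p.1+1, p.2)) (u (p.1+1, p.2+1)) ≤ 0 then (false, (p.1+1, p.2))
  else if dotp (u p) (u (p.1+1, p.2)) ≤ 0 then (true, p)
  else (true, (p.1, p.2+1))

/-- Remark 3.4: the number of vortices is bounded by the energy. -/
theorem count_vortices_le_energy (ε δ : ℝ) (u : ℤ × ℤ → ℝ × ℝ)
    (hε : ε ∈ Set.Ioo (0 : ℝ) (1 / 2)) (hδ : δ ∈ Set.Ioo (0 : ℝ) (1 / 2))
    (hu : IsSpin ε u) :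
    ε ^ 2 * ((Vortices ε u).card : ℝ) ≤ 64 * E ε δ u := by
  classical
  obtain ⟨hε0, hε1⟩ := hε
  obtain ⟨hδ0, hδ1⟩ := hδ
  set V := Vortices ε u with hVdef
  have hunit : ∀ x y : ℤ, 0 ≤ x → x ≤ Kof ε → 0 ≤ y → y ≤ Kof ε → sqnorm (u (x, y)) = 1 := by
    intro x y h1 h2 h3 h4
    exact hu (x, y) (by
      simp only [Idx, Finset.mem_product, Finset.mem_Icc]
      exact ⟨⟨h1, h2⟩, ⟨h3, h4⟩⟩)
  set termV : ℤ × ℤ → ℝ := fun q => sqnorm (u q - (2*(1-δ)) • u (q.1, q.2+1) + u (q.1, q.2+2))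
    with htermV
  set termH : ℤ × ℤ → ℝ := fun q => sqnorm (u q - (2*(1-δ)) • u (q.1+1, q.2) + u (q.1+2, q.2))
    with htermH
  set h : Bool × ℤ × ℤ → ℝ := fun t => if t.1 then termH t.2 else termV t.2 with hh
  have hnn : ∀ t, 0 ≤ h t := by
    intro t
    simp only [hh, htermH, htermV]
    split <;> exact sqnorm_nonneg _
  -- Step 1: each vortex contributes at least 1/8 via its bad bond.
  have step1 : ∀ p ∈ V, 1/8 ≤ h (badBond u p) := by
    intro p hp
    obtain ⟨hb1, hb2, hb3, hb4⟩ := vortex_bounds hp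
    obtain ⟨i, j⟩ := p
    simp only at hb1 hb2 hb3 hb4
    unfold badBond
    split_ifs with h1 h2 h3
    · simp only [hh, htermV, if_neg (by simp : ¬ (false : Bool) = true)]
      exact key_energy hδ1 hδ0 (hunit i j (by omega) (by omega) (by omega) (by omega))
        (hunit i (j+1) (by omega) (by omega) (by omega) (by omega))
        (hunit i (j+2) (by omega) (by omega) (by omega) (by omega)) h1
    · simp only [hh, htermV, if_neg (by simp : ¬ (false : Bool) = true)]
      exact key_energy hδ1 hδ0 (hunit (i+1) j (by omega) (by omega) (by omega) (by omega))
        (hunit (i+1) (j+1) (by omega) (by omega) (by omega) (by omega))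
        (hunit (i+1) (j+2) (by omega) (by omega) (by omega) (by omega)) h2
    · simp only [hh, htermH, if_pos rfl]
      exact key_energy hδ1 hδ0 (hunit i j (by omega) (by omega) (by omega) (by omega))
        (hunit (i+1) j (by omega) (by omega) (by omega) (by omega))
        (hunit (i+2) j (by omega) (by omega) (by omega) (by omega)) h3
    · have h4 : dotp (u ((i:ℤ), j+1)) (u (i+1, j+1)) ≤ 0 := by
        rcases vortex_dot hp with h' | h' | h' | h'
        · exact absurd h' h1
        · exact absurd h' h2
        · exact absurd h' h3
        · exact h'
      simp only [hh, htermH, if_pos rfl]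
      exact key_energy hδ1 hδ0 (hunit i (j+1) (by omega) (by omega) (by omega) (by omega))
        (hunit (i+1) (j+1) (by omega) (by omega) (by omega) (by omega))
        (hunit (i+2) (j+1) (by omega) (by omega) (by omega) (by omega)) h4
  -- Step 2: each triple is charged by at most two vortices.
  have fib : ∀ t : Bool × ℤ × ℤ, (V.filter (fun p => badBond u p = t)).card ≤ 2 := by
    intro t
    have hsub : V.filter (fun p => badBond u p = t) ⊆
        {t.2, (if t.1 then (t.2.1, t.2.2 - 1) else (t.2.1 - 1, t.2.2))} := by
      intro p hp
      simp only [Finset.mem_filter] at hp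
      obtain ⟨-, hbp⟩ := hp
      obtain ⟨i, j⟩ := p
      simp only [Finset.mem_insert, Finset.mem_singleton]
      unfold badBond at hbp
      split_ifs at hbp <;> rw [← hbp] <;> simp [Prod.ext_iff]
    calc (V.filter (fun p => badBond u p = t)).card
        ≤ ({t.2, (if t.1 then (t.2.1, t.2.2 - 1) else (t.2.1 - 1, t.2.2))} :
            Finset (ℤ × ℤ)).card := Finset.card_le_card hsub
      _ ≤ 2 := le_trans (Finset.card_insert_le _ _) (by simp)
  -- the image of badBond lies in the tagged index sets
  have himg : ∀ p ∈ V, badBond u p ∈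
      (IdxV ε).image (Prod.mk false) ∪ (IdxH ε).image (Prod.mk true) := by
    intro p hp
    obtain ⟨hb1, hb2, hb3, hb4⟩ := vortex_bounds hp
    obtain ⟨i, j⟩ := p
    simp only at hb1 hb2 hb3 hb4
    have hV1 : ((i:ℤ), j) ∈ IdxV ε := by
      simp only [IdxV, Finset.mem_product, Finset.mem_Icc]; omega
    have hV2 : ((i+1:ℤ), j) ∈ IdxV ε := by
      simp only [IdxV, Finset.mem_product, Finset.mem_Icc]; omega
    have hH1 : ((i:ℤ), j) ∈ IdxH ε := by
      simp only [IdxH, Finset.mem_product, Finset.mem_Icc]; omega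
    have hH2 : ((i:ℤ), j+1) ∈ IdxH ε := by
      simp only [IdxH, Finset.mem_product, Finset.mem_Icc]; omega
    unfold badBond
    split_ifs <;> simp only [Finset.mem_union, Finset.mem_image]
    · exact Or.inl ⟨_, hV1, rfl⟩
    · exact Or.inl ⟨_, hV2, rfl⟩
    · exact Or.inr ⟨_, hH1, rfl⟩
    · exact Or.inr ⟨_, hH2, rfl⟩
  set T : Finset (Bool × ℤ × ℤ) :=
    (IdxV ε).image (Prod.mk false) ∪ (IdxH ε).image (Prod.mk true) with hT
  -- sum over T
  have hTsum : ∑ t ∈ T, h t = ∑ q ∈ IdxV ε, termV q + ∑ q ∈ IdxH ε, termH q := by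
    rw [hT, Finset.sum_union (by
      rw [Finset.disjoint_left]
      rintro ⟨b, q⟩ hb1 hb2
      simp only [Finset.mem_image, Prod.mk.injEq] at hb1 hb2
      obtain ⟨_, _, hfalse, -⟩ := hb1
      obtain ⟨_, _, htrue, -⟩ := hb2
      rw [← hfalse] at htrue; exact Bool.noConfusion htrue)]
    rw [Finset.sum_image (fun x _ y _ hxy => by simpa using hxy),
        Finset.sum_image (fun x _ y _ hxy => by simpa using hxy)]
    simp only [hh]
    simp
  -- chain of inequalities
  have c1 : (V.card : ℝ) * (1/8) ≤ ∑ p ∈ V, h (badBond u p) := by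
    calc (V.card : ℝ) * (1/8) = ∑ _p ∈ V, (1/8 : ℝ) := by
          rw [Finset.sum_const, nsmul_eq_mul]
      _ ≤ ∑ p ∈ V, h (badBond u p) := Finset.sum_le_sum step1
  have c2 : ∑ p ∈ V, h (badBond u p) ≤ 2 * ∑ t ∈ T, h t := by
    rw [Finset.sum_comp]
    calc ∑ t ∈ V.image (badBond u), (V.filter (fun p => badBond u p = t)).card • h t
        ≤ ∑ t ∈ V.image (badBond u), 2 * h t := by
          apply Finset.sum_le_sum
          intro t _
          rw [nsmul_eq_mul]
          exact mul_le_mul_of_nonneg_right (by exact_mod_cast fib t) (hnn t)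
      _ ≤ ∑ t ∈ T, 2 * h t := by
          apply Finset.sum_le_sum_of_subset_of_nonneg
          · exact Finset.image_subset_iff.mpr himg
          · intro t _ _
            have := hnn t; linarith
      _ = 2 * ∑ t ∈ T, h t := by rw [Finset.mul_sum]
  have hSV0 : 0 ≤ ∑ q ∈ IdxV ε, termV q :=
    Finset.sum_nonneg fun q _ => sqnorm_nonneg _
  have hSH0 : 0 ≤ ∑ q ∈ IdxH ε, termH q :=
    Finset.sum_nonneg fun q _ => sqnorm_nonneg _
  have hcard : (V.card : ℝ) ≤ 16 * (∑ q ∈ IdxV ε, termV q + ∑ q ∈ IdxH ε, termH q) := by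
    rw [← hTsum]; linarith [c1, c2]
  have hε2 : (0 : ℝ) < ε ^ 2 := by positivity
  have hEH : Ehor ε δ u = ε ^ 2 / 2 * ∑ q ∈ IdxH ε, termH q := rfl
  have hEV : Ever ε δ u = ε ^ 2 / 2 * ∑ q ∈ IdxV ε, termV q := rfl
  have hmul := mul_le_mul_of_nonneg_left hcard hε2.le
  have hc0 : (0 : ℝ) ≤ (V.card : ℝ) := Nat.cast_nonneg _
  rw [E, hEH, hEV]
  nlinarith [mul_nonneg hε2.le hSV0, mul_nonneg hε2.le hSH0]
end

section
/- The function p satisfies: (a) for every ε > 0 there is η > 0 such that |1 − p(θ₁,θ₂)| ≤ ε whenever max{|θ₁|,|θ₂|} ≤ η (continuity of p at (0,0) with value 1); (b) p(θ₁,θ₂) ≥ 1/2 for all (θ₁,θ₂) ∈ [−π/8, π/8]²; (c) p(θ₁,θ₂) ≤ 3/2 for all (θ₁,θ₂) ∈ [−π/2, π/2]²; (d) there exists a constant c_p ∈ ℝ such that p(θ₁,θ₂) ≥ c_p for all (θ₁,θ₂) ∈ [−π, π]² (Lemma 3.1). -/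
open Real Finset

/-!
Put `s = θ₁ + θ₂` and `d = (θ₁ - θ₂) / 4`. By the sum-to-product formulas the numerator of `p` is
`8 cos s sin² d cos² d` and its denominator is `8 sin² d cos² (s / 4)`, so off the diagonal
`p = cos s / cos² (s / 4) · cos² d`. With `t = cos² (s / 4)` we have `cos s = 8 t² - 8 t + 1`, so
`cos s / t = 8 t - 8 + 1 / t` is at least `-8`, and at most `1` once `t ≥ 1 / 8`, which holds
for `|s| ≤ π`. As `cos² d ∈ [0, 1]`, this gives (c) and (d); (a) and (b) come from the continuity
of the closed form at the origin and from `cos x ≥ 1 - x² / 2`.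
-/

open Set Filter Topology

noncomputable def pfunClosedForm (θ₁ θ₂ : ℝ) : ℝ :=
  cos (θ₁ + θ₂) / cos ((θ₁ + θ₂) / 4) ^ 2 * cos ((θ₁ - θ₂) / 4) ^ 2

lemma sin_half_sub_sin_half (θ₁ θ₂ : ℝ) :
    sin (θ₂ / 2) - sin (θ₁ / 2) = -(2 * sin ((θ₁ - θ₂) / 4) * cos ((θ₁ + θ₂) / 4)) := by
  rw [sin_sub_sin, show (θ₂ / 2 - θ₁ / 2) / 2 = -((θ₁ - θ₂) / 4) by ring, sin_neg,
    show (θ₂ / 2 + θ₁ / 2) / 2 = (θ₁ + θ₂) / 4 by ring]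
  ring

lemma sin_sq_add_sin_sq_sub_one_sub_cos_add (θ₁ θ₂ : ℝ) :
    sin θ₁ ^ 2 + sin θ₂ ^ 2 - (1 - cos (θ₁ + θ₂)) =
      8 * cos (θ₁ + θ₂) * sin ((θ₁ - θ₂) / 4) ^ 2 * cos ((θ₁ - θ₂) / 4) ^ 2 := by
  have hhalf : sin ((θ₁ - θ₂) / 2) = 2 * sin ((θ₁ - θ₂) / 4) * cos ((θ₁ - θ₂) / 4) := by
    rw [← sin_two_mul]; ring_nf
  have hsq : sin ((θ₁ - θ₂) / 2) ^ 2 = 1 / 2 - cos (θ₁ - θ₂) / 2 := by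
    rw [sin_sq_eq_half_sub]; ring_nf
  calc sin θ₁ ^ 2 + sin θ₂ ^ 2 - (1 - cos (θ₁ + θ₂))
      = 2 * cos (θ₁ + θ₂) * sin ((θ₁ - θ₂) / 2) ^ 2 := by
        rw [hsq, cos_sub, cos_add]
        linear_combination cos θ₂ ^ 2 * sin_sq_add_cos_sq θ₁ +
          (1 - sin θ₁ ^ 2) * sin_sq_add_cos_sq θ₂
    _ = _ := by rw [hhalf]; ring

lemma pfun_eq_pfunClosedForm {θ₁ θ₂ : ℝ} (h : sin (θ₂ / 2) ≠ sin (θ₁ / 2)) :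
    pfun θ₁ θ₂ = pfunClosedForm θ₁ θ₂ := by
  have hne : θ₁ ≠ θ₂ := by rintro rfl; exact h rfl
  have hden := sub_ne_zero.2 h
  rw [sin_half_sub_sin_half, neg_ne_zero] at hden
  have hsin : sin ((θ₁ - θ₂) / 4) ≠ 0 := by rintro h0; simp [h0] at hden
  have hcos : cos ((θ₁ + θ₂) / 4) ≠ 0 := by rintro h0; simp [h0] at hden
  rw [pfun, if_neg hne, sin_half_sub_sin_half, sin_sq_add_sin_sq_sub_one_sub_cos_add,
    pfunClosedForm]
  field_simp
  ring

lemma pfun_eq_one_or_pfunClosedForm {θ₁ θ₂ : ℝ} (h₁ : |θ₁| ≤ π) (h₂ : |θ₂| ≤ π) :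
    pfun θ₁ θ₂ = 1 ∨ pfun θ₁ θ₂ = pfunClosedForm θ₁ θ₂ := by
  by_cases hne : θ₁ = θ₂
  · exact .inl (if_pos hne)
  refine .inr (pfun_eq_pfunClosedForm fun h => hne ?_)
  have half_mem : ∀ θ : ℝ, |θ| ≤ π → θ / 2 ∈ Icc (-(π / 2)) (π / 2) := fun θ hθ => by
    obtain ⟨hl, hr⟩ := abs_le.1 hθ
    constructor <;> linarith
  linarith [injOn_sin (half_mem θ₂ h₂) (half_mem θ₁ h₁) h]

lemma cos_four_mul (x : ℝ) : cos (4 * x) = 8 * cos x ^ 4 - 8 * cos x ^ 2 + 1 := by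
  rw [show 4 * x = 2 * (2 * x) by ring, cos_two_mul, cos_two_mul]
  ring

lemma neg_eight_le_cos_four_mul_div (x : ℝ) : -8 ≤ cos (4 * x) / cos x ^ 2 := by
  rcases (sq_nonneg (cos x)).eq_or_lt with h | h
  · rw [← h, div_zero]; norm_num
  rw [le_div_iff₀ h, cos_four_mul]
  nlinarith [pow_two_nonneg (cos x ^ 2)]

-- With `t = cos² x` the claim reads `8 t² - 9 t + 1 = (8 t - 1) (t - 1) ≤ 0`.
lemma cos_four_mul_div_le_one {x : ℝ} (h : 1 / 8 ≤ cos x ^ 2) :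
    cos (4 * x) / cos x ^ 2 ≤ 1 := by
  rw [div_le_one (by linarith), cos_four_mul]
  nlinarith [cos_sq_le_one x]

lemma half_le_cos_sq {x : ℝ} (h : |x| ≤ π / 4) : 1 / 2 ≤ cos x ^ 2 := by
  obtain ⟨hl, hr⟩ := abs_le.1 h
  have := cos_nonneg_of_mem_Icc (x := 2 * x) ⟨by linarith, by linarith⟩
  rw [cos_sq]
  linarith

lemma neg_eight_le_pfunClosedForm (θ₁ θ₂ : ℝ) : -8 ≤ pfunClosedForm θ₁ θ₂ := by
  have h := neg_eight_le_cos_four_mul_div ((θ₁ + θ₂) / 4)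
  rw [mul_div_cancel₀ _ four_ne_zero] at h
  unfold pfunClosedForm
  nlinarith [cos_sq_le_one ((θ₁ - θ₂) / 4), sq_nonneg (cos ((θ₁ - θ₂) / 4))]

lemma pfunClosedForm_le_one {θ₁ θ₂ : ℝ} (h : |θ₁ + θ₂| ≤ π) : pfunClosedForm θ₁ θ₂ ≤ 1 := by
  have hquarter : |(θ₁ + θ₂) / 4| ≤ π / 4 := by
    rw [abs_div, abs_of_pos (zero_lt_four : (0 : ℝ) < 4)]
    linarith
  have h := cos_four_mul_div_le_one (x := (θ₁ + θ₂) / 4) (by linarith [half_le_cos_sq hquarter])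
  rw [mul_div_cancel₀ _ four_ne_zero] at h
  unfold pfunClosedForm
  nlinarith [cos_sq_le_one ((θ₁ - θ₂) / 4), sq_nonneg (cos ((θ₁ - θ₂) / 4))]

lemma half_le_pfunClosedForm {θ₁ θ₂ : ℝ} (hs : |θ₁ + θ₂| ≤ π / 4) (hd : |θ₁ - θ₂| ≤ π / 4) :
    1 / 2 ≤ pfunClosedForm θ₁ θ₂ := by
  set s := θ₁ + θ₂
  set d := (θ₁ - θ₂) / 4
  have hπ := pi_lt_d2
  have hs2 : s ^ 2 ≤ 0.63 := by nlinarith [sq_abs s, abs_nonneg s]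
  have hd2 : d ^ 2 ≤ 0.04 := by
    have : |d| ≤ π / 16 := by rw [abs_div, abs_of_pos (zero_lt_four : (0 : ℝ) < 4)]; linarith
    nlinarith [sq_abs d, abs_nonneg d]
  have hcos_s : 0.685 ≤ cos s := by linarith [one_sub_sq_div_two_le_cos (x := s)]
  have hcos_d : 0.98 ≤ cos d := by linarith [one_sub_sq_div_two_le_cos (x := d)]
  have hdiv : cos s ≤ cos s / cos (s / 4) ^ 2 :=
    le_div_self (by linarith) (by nlinarith [one_sub_sq_div_two_le_cos (x := s / 4)])
      (cos_sq_le_one _)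
  calc (1 : ℝ) / 2 ≤ cos s * cos d ^ 2 := by nlinarith
    _ ≤ pfunClosedForm θ₁ θ₂ := mul_le_mul_of_nonneg_right hdiv (sq_nonneg _)

lemma tendsto_pfunClosedForm :
    Tendsto (fun θ : ℝ × ℝ => pfunClosedForm θ.1 θ.2) (𝓝 0) (𝓝 1) := by
  have hcont : ContinuousAt (fun θ : ℝ × ℝ => pfunClosedForm θ.1 θ.2) 0 := by
    unfold pfunClosedForm
    fun_prop (disch := simp)
  simpa [pfunClosedForm] using hcont.tendsto

lemma abs_add_le_and_abs_sub_le_of_mem_Icc {a θ₁ θ₂ : ℝ} (h₁ : θ₁ ∈ Icc (-a) a)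
    (h₂ : θ₂ ∈ Icc (-a) a) : |θ₁ + θ₂| ≤ 2 * a ∧ |θ₁ - θ₂| ≤ 2 * a := by
  have := abs_le.2 h₁
  have := abs_le.2 h₂
  exact ⟨by linarith [abs_add_le θ₁ θ₂], by linarith [abs_sub θ₁ θ₂]⟩

/-- Lemma 3.1: properties of the function `p`. -/
theorem pfun_properties :
    (∀ ε : ℝ, 0 < ε → ∃ η : ℝ, 0 < η ∧ ∀ θ₁ θ₂ : ℝ,
        max |θ₁| |θ₂| ≤ η → |1 - pfun θ₁ θ₂| ≤ ε) ∧
    (∀ θ₁ θ₂ : ℝ, θ₁ ∈ Set.Icc (-(π / 8)) (π / 8) → θ₂ ∈ Set.Icc (-(π / 8)) (π / 8) →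
        1 / 2 ≤ pfun θ₁ θ₂) ∧
    (∀ θ₁ θ₂ : ℝ, θ₁ ∈ Set.Icc (-(π / 2)) (π / 2) → θ₂ ∈ Set.Icc (-(π / 2)) (π / 2) →
        pfun θ₁ θ₂ ≤ 3 / 2) ∧
    (∃ cp : ℝ, ∀ θ₁ θ₂ : ℝ, θ₁ ∈ Set.Icc (-π) π → θ₂ ∈ Set.Icc (-π) π →
        cp ≤ pfun θ₁ θ₂) := by
  have abs_le_pi : ∀ {a θ : ℝ}, a ≤ π → θ ∈ Icc (-a) a → |θ| ≤ π := fun ha hθ =>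
    (abs_le.2 hθ).trans ha
  refine ⟨fun ε hε => ?_, fun θ₁ θ₂ h₁ h₂ => ?_, fun θ₁ θ₂ h₁ h₂ => ?_,
    ⟨-8, fun θ₁ θ₂ h₁ h₂ => ?_⟩⟩
  · obtain ⟨δ, hδ, hball⟩ := Metric.tendsto_nhds_nhds.1 tendsto_pfunClosedForm ε hε
    refine ⟨min (δ / 2) π, by positivity, fun θ₁ θ₂ h => ?_⟩
    have hδ' : max |θ₁| |θ₂| < δ := by linarith [min_le_left (δ / 2) π]
    rcases pfun_eq_one_or_pfunClosedForm ((le_max_left _ _).trans (h.trans (min_le_right _ _)))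
      ((le_max_right _ _).trans (h.trans (min_le_right _ _))) with hp | hp
    · simp [hp, hε.le]
    · rw [hp, abs_sub_comm]
      exact (hball (x := (θ₁, θ₂)) (by simpa [Prod.dist_eq] using hδ')).le
  · obtain ⟨hs, hd⟩ := abs_add_le_and_abs_sub_le_of_mem_Icc h₁ h₂
    rcases pfun_eq_one_or_pfunClosedForm (abs_le_pi (by linarith [pi_pos]) h₁)
      (abs_le_pi (by linarith [pi_pos]) h₂) with hp | hp
    · norm_num [hp]
    · exact hp ▸ half_le_pfunClosedForm (by linarith) (by linarith)
  · obtain ⟨hs, -⟩ := abs_add_le_and_abs_sub_le_of_mem_Icc h₁ h₂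
    rcases pfun_eq_one_or_pfunClosedForm (abs_le_pi (by linarith [pi_pos]) h₁)
      (abs_le_pi (by linarith [pi_pos]) h₂) with hp | hp
    · norm_num [hp]
    · linarith [hp ▸ pfunClosedForm_le_one (by linarith)]
  · rcases pfun_eq_one_or_pfunClosedForm (abs_le.2 h₁) (abs_le.2 h₂) with hp | hp
    · norm_num [hp]
    · exact hp ▸ neg_eight_le_pfunClosedForm θ₁ θ₂
end

section
/- Let ε ∈ (0,1/2), δ^{hor}, δ^{ver} ∈ (0,1) with max{arccos(1−δ^{hor}), arccos(1−δ^{ver})} ≤ π/16, let u be a spin field with horizontal angular velocities θ^{hor}, and set w_{i,j} := (2/δ^{hor})^{1/2}·sin(θ^{hor}_{i,j}/2). Let c_p ∈ ℝ with c_p ≤ 1/2 be such that p(θ₁,θ₂) ≥ c_p for all (θ₁,θ₂) ∈ [−π,π]², and set A^{hor} := {(i,j) ∈ I : i+2 ≤ K and max{|θ^{hor}_{i+1,j}|, |θ^{hor}_{i,j}|} ≥ π/8}. Then δ^{hor}·ε⁴ · Σ_{(i,j) ∈ I, i+2 ≤ K} p(θ^{hor}_{i+1,j}, θ^{hor}_{i,j})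 · |(w_{i+1,j} − w_{i,j})/ε|² ≥ (1/2)·δ^{hor}·ε⁴ · Σ_{(i,j) ∈ I, i+2 ≤ K} |(w_{i+1,j} − w_{i,j})/ε|² − 2π²·(1 − 2c_p)·ε² · #A^{hor} (Lemma 3.2, horizontal version). -/
open Real Finset

/-! Work site by site. Writing `x, y` for the sines of the half angles, the numerator of `p` is
`(y - x)² + (x + y)² - 4(x⁴ + y⁴ - x²y²) - 4xy·cos(θ₁/2)cos(θ₂/2)`, and for `x², y² ≤ 1/25` the last
three terms have nonnegative sum; hence `p ≥ 1/2` whenever both angles are below `π/8`. At the remaining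
sites only `p ≥ c_p` is available, and the loss `(1/2 - c_p)·δ ε⁴ |∂w|² = (1 - 2c_p) ε² (x - y)²` is
at most `4(1 - 2c_p) ε² ≤ 2π²(1 - 2c_p) ε²`. -/

lemma four_mul_mul_mul_le_of_sq_le (x y q : ℝ) (hx : x ^ 2 ≤ 1 / 25) (hy : y ^ 2 ≤ 1 / 25)
    (hq : 0 ≤ q) (hq2 : q ^ 2 = (1 - x ^ 2) * (1 - y ^ 2)) :
    4 * (x * y) * q ≤ (x + y) ^ 2 - 4 * (x ^ 4 + y ^ 4 - x ^ 2 * y ^ 2) := by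
  rcases le_or_gt (x * y) 0 with hxy | hxy
  · have hq1 : q ≤ 1 := by nlinarith
    nlinarith [sq_nonneg (x + y), sq_nonneg (x - y), sq_nonneg (x * y),
      mul_nonneg hq (neg_nonneg.2 hxy)]
  · have hrhs : 0 ≤ (x + y) ^ 2 - 4 * (x ^ 4 + y ^ 4 - x ^ 2 * y ^ 2) := by
      nlinarith [sq_nonneg (x - y), sq_nonneg (x + y), sq_nonneg (x ^ 2 - y ^ 2)]
    -- both sides are nonnegative, so it suffices to compare their squares
    have hsq : 16 * x ^ 2 * y ^ 2 * (1 - x ^ 2) * (1 - y ^ 2) ≤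
        ((x + y) ^ 2 - 4 * (x ^ 4 + y ^ 4 - x ^ 2 * y ^ 2)) ^ 2 := by
      nlinarith [sq_nonneg (x - y), sq_nonneg (x + y), sq_nonneg (x * y), sq_nonneg (x ^ 2 - y ^ 2),
        sq_nonneg ((x - y) * (x + y) ^ 2), sq_nonneg (x ^ 2 + y ^ 2), mul_pos hxy hxy]
    have hlhs_sq : (4 * (x * y) * q) ^ 2 = 16 * x ^ 2 * y ^ 2 * ((1 - x ^ 2) * (1 - y ^ 2)) := by
      rw [mul_pow, mul_pow, hq2]; ring
    exact abs_le_of_sq_le_sq' (by nlinarith) hrhs |>.2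

lemma sin_two_mul_sq_add_sin_two_mul_sq_sub_one_sub_cos_add (α β : ℝ) :
    sin (2 * α) ^ 2 + sin (2 * β) ^ 2 - (1 - cos (2 * α + 2 * β)) =
      2 * sin α ^ 2 + 2 * sin β ^ 2 - 4 * (sin α ^ 4 + sin β ^ 4 - sin α ^ 2 * sin β ^ 2)
        - 4 * (sin α * sin β) * (cos α * cos β) := by
  rw [cos_add, sin_two_mul, sin_two_mul, cos_two_mul, cos_two_mul]
  linear_combination (4 * sin α ^ 2 + 4 * cos β ^ 2 - 2) * sin_sq_add_cos_sq α
    + (2 - 4 * sin α ^ 2 + 4 * sin β ^ 2) * sin_sq_add_cos_sq β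

lemma sq_sin_half_le_of_abs_le {a : ℝ} (ha : |a| ≤ 2 / 5) : sin (a / 2) ^ 2 ≤ 1 / 25 := by
  have h : |sin (a / 2)| ≤ 1 / 5 := by
    calc |sin (a / 2)| ≤ |a / 2| := abs_sin_le_abs
      _ ≤ 1 / 5 := by rw [abs_div, abs_two]; linarith
  nlinarith [abs_nonneg (sin (a / 2)), sq_abs (sin (a / 2))]

lemma cos_half_pos_of_abs_lt_pi {a : ℝ} (ha : |a| < π) : 0 < cos (a / 2) := by
  have := abs_lt.1 ha
  exact cos_pos_of_mem_Ioo ⟨by linarith, by linarith⟩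

lemma half_le_pfun_of_abs_le {a b : ℝ} (ha : |a| ≤ 2 / 5) (hb : |b| ≤ 2 / 5)
    (hab : sin (a / 2) ≠ sin (b / 2)) : 1 / 2 ≤ pfun a b := by
  have hdiff : sin (b / 2) - sin (a / 2) ≠ 0 := sub_ne_zero.2 hab.symm
  rw [pfun, if_neg (fun h => hab (by rw [h])), le_div_iff₀ (by positivity)]
  set x := sin (a / 2)
  set y := sin (b / 2)
  have hcos : (cos (a / 2) * cos (b / 2)) ^ 2 = (1 - x ^ 2) * (1 - y ^ 2) := by
    rw [mul_pow, cos_sq', cos_sq']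
  have hcos_pos {θ : ℝ} (hθ : |θ| ≤ 2 / 5) : 0 < cos (θ / 2) :=
    cos_half_pos_of_abs_lt_pi (hθ.trans_lt (by linarith [pi_gt_three]))
  have key := four_mul_mul_mul_le_of_sq_le x y _ (sq_sin_half_le_of_abs_le ha)
    (sq_sin_half_le_of_abs_le hb) (mul_pos (hcos_pos ha) (hcos_pos hb)).le hcos
  have hnum := sin_two_mul_sq_add_sin_two_mul_sq_sub_one_sub_cos_add (a / 2) (b / 2)
  rw [mul_div_cancel₀ a two_ne_zero, mul_div_cancel₀ b two_ne_zero] at hnum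
  rw [hnum]
  linarith

lemma thetaH_mem_Icc (u : ℤ × ℤ → ℝ × ℝ) (p : ℤ × ℤ) : thetaH u p ∈ Set.Icc (-π) π := by
  have h0 := arccos_nonneg (dotp (u p) (u (p.1 + 1, p.2)))
  have hπ := arccos_le_pi (dotp (u p) (u (p.1 + 1, p.2)))
  unfold thetaH sgn
  split_ifs <;> constructor <;> linarith

lemma mul_pow_four_mul_div_sq_eq {δ ε : ℝ} (hδ : 0 < δ) (hε : ε ≠ 0) (s t : ℝ) :
    δ * ε ^ 4 * ((√(2 / δ) * s - √(2 / δ) * t) / ε) ^ 2 = 2 * ε ^ 2 * (s - t) ^ 2 := by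
  have hsqrt : √(2 / δ) ^ 2 = 2 / δ := sq_sqrt (by positivity)
  rw [div_pow, ← mul_sub, mul_pow, hsqrt]
  field_simp

lemma weighted_site_bound {δ ε cp θ₁ θ₂ : ℝ} (hδ : 0 < δ) (hε : ε ≠ 0) (hcp : cp ≤ 1 / 2)
    (hp : cp ≤ pfun θ₁ θ₂) :
    1 / 2 * δ * ε ^ 4 * ((√(2 / δ) * sin (θ₁ / 2) - √(2 / δ) * sin (θ₂ / 2)) / ε) ^ 2
        - 2 * π ^ 2 * (1 - 2 * cp) * ε ^ 2 * (if π / 8 ≤ max |θ₁| |θ₂| then 1 else 0)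
      ≤ δ * ε ^ 4 *
          (pfun θ₁ θ₂ * ((√(2 / δ) * sin (θ₁ / 2) - √(2 / δ) * sin (θ₂ / 2)) / ε) ^ 2) := by
  set g := ((√(2 / δ) * sin (θ₁ / 2) - √(2 / δ) * sin (θ₂ / 2)) / ε) ^ 2
  set D := (sin (θ₁ / 2) - sin (θ₂ / 2)) ^ 2
  rw [show 1 / 2 * δ * ε ^ 4 * g = 1 / 2 * (δ * ε ^ 4 * g) by ring,
    show δ * ε ^ 4 * (pfun θ₁ θ₂ * g) = pfun θ₁ θ₂ * (δ * ε ^ 4 * g) by ring,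
    mul_pow_four_mul_div_sq_eq hδ hε]
  have hD : 0 ≤ 2 * ε ^ 2 * D := by positivity
  split_ifs with hlarge
  · have hD4 : D ≤ 2 * π ^ 2 := by
      nlinarith [abs_le.1 (abs_sin_le_one (θ₁ / 2)), abs_le.1 (abs_sin_le_one (θ₂ / 2)),
        pi_gt_three]
    have h1 := mul_le_mul_of_nonneg_right hp hD
    have h2 := mul_le_mul_of_nonneg_left hD4
      (mul_nonneg (by linarith : 0 ≤ 1 - 2 * cp) (sq_nonneg ε))
    linarith
  · rw [not_le, max_lt_iff] at hlarge
    by_cases hs : sin (θ₁ / 2) = sin (θ₂ / 2)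
    · simp [hs]
    have hsmall {θ : ℝ} (hθ : |θ| < π / 8) : |θ| ≤ 2 / 5 := by linarith [pi_lt_d2]
    have h := mul_le_mul_of_nonneg_right
      (half_le_pfun_of_abs_le (hsmall hlarge.1) (hsmall hlarge.2) hs) hD
    linarith

theorem weighted_gradient_lower_bound_general (ε δhor cp : ℝ) (u : ℤ × ℤ → ℝ × ℝ)
    (hε : ε ∈ Set.Ioo (0 : ℝ) (1 / 2))
    (hδh : δhor ∈ Set.Ioo (0 : ℝ) 1)
    (hcp : cp ≤ 1 / 2)
    (hcplow : ∀ θ₁ θ₂ : ℝ, θ₁ ∈ Set.Icc (-π) π → θ₂ ∈ Set.Icc (-π) π → cp ≤ pfun θ₁ θ₂) :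
    δhor * ε ^ 4 * ∑ p ∈ IdxH ε,
        pfun (thetaH u (p.1 + 1, p.2)) (thetaH u p) *
          ((Real.sqrt (2 / δhor) * Real.sin (thetaH u (p.1 + 1, p.2) / 2) -
              Real.sqrt (2 / δhor) * Real.sin (thetaH u p / 2)) / ε) ^ 2
      ≥ 1 / 2 * δhor * ε ^ 4 * ∑ p ∈ IdxH ε,
          ((Real.sqrt (2 / δhor) * Real.sin (thetaH u (p.1 + 1, p.2) / 2) -
              Real.sqrt (2 / δhor) * Real.sin (thetaH u p / 2)) / ε) ^ 2
        - 2 * π ^ 2 * (1 - 2 * cp) * ε ^ 2 *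
            (((IdxH ε).filter
              (fun p => π / 8 ≤ max |thetaH u (p.1 + 1, p.2)| |thetaH u p|)).card : ℝ) := by
  rw [ge_iff_le, natCast_card_filter, mul_sum, mul_sum, mul_sum, ← sum_sub_distrib]
  exact sum_le_sum fun p _ => weighted_site_bound hδh.1 hε.1.ne' hcp
    (hcplow _ _ (thetaH_mem_Icc u _) (thetaH_mem_Icc u p))

/-- Lemma 3.2 (horizontal version): lower bound for the `p`-weighted gradient term. -/
theorem weighted_gradient_lower_bound (ε δhor δver cp : ℝ) (u : ℤ × ℤ → ℝ × ℝ)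
    (hε : ε ∈ Set.Ioo (0 : ℝ) (1 / 2))
    (hδh : δhor ∈ Set.Ioo (0 : ℝ) 1) (hδv : δver ∈ Set.Ioo (0 : ℝ) 1)
    (hangle : max (Real.arccos (1 - δhor)) (Real.arccos (1 - δver)) ≤ π / 16)
    (hu : IsSpin ε u)
    (hcp : cp ≤ 1 / 2)
    (hcplow : ∀ θ₁ θ₂ : ℝ, θ₁ ∈ Set.Icc (-π) π → θ₂ ∈ Set.Icc (-π) π → cp ≤ pfun θ₁ θ₂) :
    δhor * ε ^ 4 * ∑ p ∈ IdxH ε,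
        pfun (thetaH u (p.1 + 1, p.2)) (thetaH u p) *
          ((Real.sqrt (2 / δhor) * Real.sin (thetaH u (p.1 + 1, p.2) / 2) -
              Real.sqrt (2 / δhor) * Real.sin (thetaH u p / 2)) / ε) ^ 2
      ≥ 1 / 2 * δhor * ε ^ 4 * ∑ p ∈ IdxH ε,
          ((Real.sqrt (2 / δhor) * Real.sin (thetaH u (p.1 + 1, p.2) / 2) -
              Real.sqrt (2 / δhor) * Real.sin (thetaH u p / 2)) / ε) ^ 2
        - 2 * π ^ 2 * (1 - 2 * cp) * ε ^ 2 *
            (((IdxH ε).filter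
              (fun p => π / 8 ≤ max |thetaH u (p.1 + 1, p.2)| |thetaH u p|)).card : ℝ) :=
  weighted_gradient_lower_bound_general ε δhor cp u hε hδh hcp hcplow
end

section
/- For all vectors u, v, w ∈ ℝ² with |u| = |v| = |w| = 1 and every δ ∈ (0,1), one has |u − 2(1−δ)v + w|² ≥ (1−δ)² · max{(1 − δ − u·v)², (1 − δ − v·w)²} (the pointwise estimate established in the proof of Lemma 3.3). -/
open Real Finset

set_option maxHeartbeats 1000000 in
lemma key_est (u v w : ℝ × ℝ) (hu : sqnorm u = 1) (hv : sqnorm v = 1)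
    (hw : sqnorm w = 1) (δ : ℝ) (hδ : δ ∈ Set.Ioo (0 : ℝ) 1) :
    (1 - δ) ^ 2 * (1 - δ - dotp u v) ^ 2 ≤ sqnorm (u - (2 * (1 - δ)) • v + w) := by
  obtain ⟨hδ0, hδ1⟩ := hδ
  obtain ⟨u1, u2⟩ := u
  obtain ⟨v1, v2⟩ := v
  obtain ⟨w1, w2⟩ := w
  simp only [sqnorm, dotp, Prod.mk_sub_mk, Prod.mk_add_mk, Prod.smul_mk, smul_eq_mul] at *
  set l : ℝ := 1 - δ with hl
  have hl0 : 0 < l := by linarith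
  have hl1 : l < 1 := by linarith
  set s : ℝ := Real.sqrt ((u1 - 2 * l * v1) ^ 2 + (u2 - 2 * l * v2) ^ 2) with hs
  have hs0 : 0 ≤ s := Real.sqrt_nonneg _
  have hs2 : s ^ 2 = (u1 - 2 * l * v1) ^ 2 + (u2 - 2 * l * v2) ^ 2 :=
    Real.sq_sqrt (by positivity)
  -- s^2 = 1 + 4l^2 - 4l * p
  have hs2' : s ^ 2 = 1 + 4 * l ^ 2 - 4 * l * (u1 * v1 + u2 * v2) := by
    rw [hs2]; nlinarith [hu, hv]
  -- p bounds
  have hp : (u1 * v1 + u2 * v2) ^ 2 ≤ 1 := by nlinarith [sq_nonneg (u1 * v2 - u2 * v1)]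
  have hp1 : -1 ≤ u1 * v1 + u2 * v2 := by nlinarith
  have hsle : s ≤ 1 + 2 * l := by nlinarith
  -- Cauchy-Schwarz: Y·w ≥ -s
  have hcs : ((u1 - 2 * l * v1) * w1 + (u2 - 2 * l * v2) * w2) ^ 2 ≤ s ^ 2 := by
    rw [hs2]; nlinarith [sq_nonneg ((u1 - 2 * l * v1) * w2 - (u2 - 2 * l * v2) * w1), hw]
  have hdot : -s ≤ (u1 - 2 * l * v1) * w1 + (u2 - 2 * l * v2) * w2 := by
    nlinarith [abs_le_of_sq_le_sq' hcs hs0]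
  -- |X|^2 ≥ (s-1)^2
  have hexp : (u1 - 2 * l * v1 + w1) ^ 2 + (u2 - 2 * l * v2 + w2) ^ 2
      = s ^ 2 + (w1 ^ 2 + w2 ^ 2) +
        2 * ((u1 - 2 * l * v1) * w1 + (u2 - 2 * l * v2) * w2) := by
    rw [hs2]; ring
  have hX : (s - 1) ^ 2 ≤ (u1 - 2 * l * v1 + w1) ^ 2 + (u2 - 2 * l * v2 + w2) ^ 2 := by
    rw [hexp, hw]
    have h2 : (s - 1) ^ 2 = s ^ 2 - 2 * s + 1 := by ring
    linarith [hdot]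
  -- key algebraic identity
  have hid : (s - 1) ^ 2 * (s + 1) ^ 2 = 16 * l ^ 2 * (l - (u1 * v1 + u2 * v2)) ^ 2 := by
    have h : (s ^ 2 - 1) = 4 * l * (l - (u1 * v1 + u2 * v2)) := by rw [hs2']; ring
    calc (s - 1) ^ 2 * (s + 1) ^ 2 = (s ^ 2 - 1) ^ 2 := by ring
      _ = (4 * l * (l - (u1 * v1 + u2 * v2))) ^ 2 := by rw [h]
      _ = 16 * l ^ 2 * (l - (u1 * v1 + u2 * v2)) ^ 2 := by ring
  have hfin : l ^ 2 * (l - (u1 * v1 + u2 * v2)) ^ 2 ≤ (s - 1) ^ 2 := by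
    nlinarith [sq_nonneg (s - 1), mul_nonneg (sq_nonneg (s - 1)) (sq_nonneg (s + 1)),
      mul_le_mul_of_nonneg_left (show (s + 1) ^ 2 ≤ 16 by nlinarith) (sq_nonneg (s - 1))]
  exact hfin.trans hX

/-- The pointwise estimate from the proof of Lemma 3.3. -/
theorem pointwise_estimate (u v w : ℝ × ℝ) (hu : sqnorm u = 1) (hv : sqnorm v = 1)
    (hw : sqnorm w = 1) (δ : ℝ) (hδ : δ ∈ Set.Ioo (0 : ℝ) 1) :
    (1 - δ) ^ 2 * max ((1 - δ - dotp u v) ^ 2) ((1 - δ - dotp v w) ^ 2)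
      ≤ sqnorm (u - (2 * (1 - δ)) • v + w) := by
  rcases max_cases ((1 - δ - dotp u v) ^ 2) ((1 - δ - dotp v w) ^ 2) with ⟨h, _⟩ | ⟨h, _⟩
  · rw [h]; exact key_est u v w hu hv hw δ hδ
  · rw [h]
    have h1 : dotp v w = dotp w v := by simp only [dotp]; ring
    have h2 : sqnorm (u - (2 * (1 - δ)) • v + w) = sqnorm (w - (2 * (1 - δ)) • v + u) := by
      simp only [sqnorm, Prod.fst_add, Prod.snd_add, Prod.fst_sub, Prod.snd_sub,
        Prod.smul_fst, Prod.smul_snd, smul_eq_mul]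
      ring
    rw [h1, h2]
    exact key_est w v u hw hv hu δ hδ
end

section
/- Let ε ∈ (0,1/2), δ ∈ (0,1), and let u be any spin field with horizontal angular velocities θ^{hor}. Then the horizontal energy admits the exact reformulation E^{hor}_{ε,δ}(u) = ε² Σ_{(i,j) ∈ I, i+2 ≤ K} [ (1 − δ − cos θ^{hor}_{i,j})² + (1 − δ − cos θ^{hor}_{i+1,j})² + q(θ^{hor}_{i,j}, θ^{hor}_{i+1,j}) ], where q(θ₁,θ₂) := sin²θ₁ + sin²θ₂ − (1 − cos(θ₁+θ₂)) (the energy reformulation in terms of angular velocities). -/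
open Real Finset

lemma cos_sgn_arccos (d c : ℝ) (h : d ^ 2 + c ^ 2 = 1) :
    Real.cos (sgn c * Real.arccos d) = d := by
  have hd1 : -1 ≤ d := by nlinarith
  have hd2 : d ≤ 1 := by nlinarith
  unfold sgn
  split
  · simp [Real.cos_arccos hd1 hd2]
  · rw [neg_one_mul, Real.cos_neg, Real.cos_arccos hd1 hd2]

lemma sin_sgn_arccos (d c : ℝ) (h : d ^ 2 + c ^ 2 = 1) :
    Real.sin (sgn c * Real.arccos d) = c := by
  have hd1 : -1 ≤ d := by nlinarith
  have hd2 : d ≤ 1 := by nlinarith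
  have hs : Real.sin (Real.arccos d) = Real.sqrt (1 - d ^ 2) := Real.sin_arccos d
  have h1 : (1 : ℝ) - d ^ 2 = c ^ 2 := by linarith
  unfold sgn
  split
  · next hc =>
    rw [one_mul, hs, h1, Real.sqrt_sq hc.le]
  · next hc =>
    push_neg at hc
    rw [neg_one_mul, Real.sin_neg, hs, h1,
      Real.sqrt_sq_eq_abs, abs_of_nonpos hc, neg_neg]

lemma dotp_sq_add_crossp_sq (a b : ℝ × ℝ) :
    dotp a b ^ 2 + crossp a b ^ 2 = sqnorm a * sqnorm b := by
  simp only [dotp, crossp, sqnorm]; ring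

lemma cos_thetaH (u : ℤ × ℤ → ℝ × ℝ) (p : ℤ × ℤ)
    (ha : sqnorm (u p) = 1) (hb : sqnorm (u (p.1 + 1, p.2)) = 1) :
    Real.cos (thetaH u p) = dotp (u p) (u (p.1 + 1, p.2)) := by
  apply cos_sgn_arccos
  rw [dotp_sq_add_crossp_sq, ha, hb]; ring

lemma sin_thetaH (u : ℤ × ℤ → ℝ × ℝ) (p : ℤ × ℤ)
    (ha : sqnorm (u p) = 1) (hb : sqnorm (u (p.1 + 1, p.2)) = 1) :
    Real.sin (thetaH u p) = crossp (u p) (u (p.1 + 1, p.2)) := by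
  apply sin_sgn_arccos
  rw [dotp_sq_add_crossp_sq, ha, hb]; ring

/-- The energy reformulation in terms of angular velocities, with
`q(θ₁,θ₂) = sin²θ₁ + sin²θ₂ − (1 − cos(θ₁+θ₂))`. -/
theorem energy_reformulation (ε δ : ℝ) (u : ℤ × ℤ → ℝ × ℝ)
    (hε : ε ∈ Set.Ioo (0 : ℝ) (1 / 2)) (hδ : δ ∈ Set.Ioo (0 : ℝ) 1)
    (hu : IsSpin ε u) :
    Ehor ε δ u = ε ^ 2 * ∑ p ∈ IdxH ε,
      ((1 - δ - Real.cos (thetaH u p)) ^ 2 +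
        (1 - δ - Real.cos (thetaH u (p.1 + 1, p.2))) ^ 2 +
        (Real.sin (thetaH u p) ^ 2 + Real.sin (thetaH u (p.1 + 1, p.2)) ^ 2 -
          (1 - Real.cos (thetaH u p + thetaH u (p.1 + 1, p.2))))) := by
  have key : ∀ p ∈ IdxH ε,
      sqnorm (u p - (2 * (1 - δ)) • u (p.1 + 1, p.2) + u (p.1 + 2, p.2)) =
      2 * ((1 - δ - Real.cos (thetaH u p)) ^ 2 +
        (1 - δ - Real.cos (thetaH u (p.1 + 1, p.2))) ^ 2 +
        (Real.sin (thetaH u p) ^ 2 + Real.sin (thetaH u (p.1 + 1, p.2)) ^ 2 -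
          (1 - Real.cos (thetaH u p + thetaH u (p.1 + 1, p.2))))) := by
    intro p hp
    simp only [IdxH, Finset.mem_product, Finset.mem_Icc] at hp
    have mem : ∀ k : ℤ, 0 ≤ k → k ≤ Kof ε → ((k, p.2) : ℤ × ℤ) ∈ Idx ε := by
      intro k h1 h2
      simp only [Idx, Finset.mem_product, Finset.mem_Icc]
      exact ⟨⟨h1, h2⟩, hp.2⟩
    have ha : sqnorm (u p) = 1 := by
      have := hu (p.1, p.2) (mem p.1 hp.1.1 (by omega))
      simpa using this
    have hb : sqnorm (u (p.1 + 1, p.2)) = 1 :=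
      hu (p.1 + 1, p.2) (mem (p.1 + 1) (by omega) (by omega))
    have hd : sqnorm (u (p.1 + 2, p.2)) = 1 :=
      hu (p.1 + 2, p.2) (mem (p.1 + 2) (by omega) (by omega))
    have e : ((p.1 : ℤ) + 1 + 1, p.2) = ((p.1 : ℤ) + 2, p.2) := by
      rw [show (p.1 : ℤ) + 1 + 1 = p.1 + 2 by ring]
    have hd' : sqnorm (u ((p.1 + 1, p.2).1 + 1, (p.1 + 1, p.2).2)) = 1 := by
      simpa [e] using hd
    have hc1 := cos_thetaH u p ha hb
    have hs1 := sin_thetaH u p ha hb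
    have hc2 := cos_thetaH u (p.1 + 1, p.2) hb hd'
    have hs2 := sin_thetaH u (p.1 + 1, p.2) hb hd'
    simp only [e] at hc2 hs2
    rw [Real.cos_add, hc1, hs1, hc2, hs2]
    simp only [sqnorm, dotp, crossp, Prod.fst_sub, Prod.snd_sub, Prod.fst_add,
      Prod.snd_add, Prod.smul_fst, Prod.smul_snd, smul_eq_mul] at *
    set a := u p
    set b := u (p.1 + 1, p.2)
    set d := u (p.1 + 2, p.2)
    linear_combination (-1 : ℝ) * ha +
      (4 * (1 - δ) ^ 2 - 2 * (a.1 * d.1 + a.2 * d.2) - 2 * (a.1 ^ 2 + a.2 ^ 2)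
        - 2 * (d.1 ^ 2 + d.2 ^ 2)) * hb +
      (-1 : ℝ) * hd
  unfold Ehor
  rw [Finset.sum_congr rfl key, ← Finset.mul_sum]
  ring
end

section
/- Let δ ∈ (0,1) be such that arccos(1−δ) < π/3. Then for every θ ∈ [−π/3, π/3] one has |θ² − (arccos(1−δ))²| ≤ 4·|1 − δ − cos θ| (the comparison estimate between the squared angle deviation and the potential term, inequality (4.16) of the paper). -/
open Real Finset

/-- Jordan's inequality `sin x ≥ 2x/π` makes the derivative `2x - 4 sin x` nonpositive. -/
theorem antitoneOn_sq_add_four_mul_cos :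
    AntitoneOn (fun x : ℝ => x ^ 2 + 4 * cos x) (Set.Icc 0 (π / 2)) := by
  have hderiv (x : ℝ) : HasDerivAt (fun x : ℝ => x ^ 2 + 4 * cos x) (2 * x - 4 * sin x) x := by
    refine ((hasDerivAt_pow 2 x).add ((hasDerivAt_cos x).const_mul 4)).congr_deriv ?_
    push_cast
    ring
  refine antitoneOn_of_deriv_nonpos (convex_Icc _ _) (by fun_prop)
    (fun x _ => (hderiv x).differentiableAt.differentiableWithinAt) fun x hx => ?_
  rw [interior_Icc] at hx
  have hjordan := mul_le_sin hx.1.le hx.2.le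
  have hhalf : 2 / π * x ≥ x / 2 := by
    rw [div_mul_eq_mul_div, ge_iff_le, div_le_div_iff₀ two_pos pi_pos]
    nlinarith [pi_lt_four, hx.1]
  rw [(hderiv x).deriv]
  linarith

theorem sq_sub_sq_le_four_mul_cos_sub_cos {x y : ℝ} (hy : 0 ≤ y) (hyx : y ≤ x) (hx : x ≤ π / 2) :
    x ^ 2 - y ^ 2 ≤ 4 * (cos y - cos x) := by
  have hmono := antitoneOn_sq_add_four_mul_cos ⟨hy, hyx.trans hx⟩ ⟨hy.trans hyx, hx⟩ hyx
  simp only at hmono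
  linarith

theorem abs_sq_sub_sq_le_four_mul_abs_cos_sub_cos {x y : ℝ} (hx : |x| ≤ π / 2)
    (hy : |y| ≤ π / 2) : |x ^ 2 - y ^ 2| ≤ 4 * |cos x - cos y| := by
  wlog h : |y| ≤ |x| generalizing x y
  · rw [abs_sub_comm, abs_sub_comm (cos x)]
    exact this hy hx (le_of_not_ge h)
  rw [← sq_abs x, ← sq_abs y, ← cos_abs x, ← cos_abs y]
  calc |(|x| ^ 2 - |y| ^ 2)| = |x| ^ 2 - |y| ^ 2 :=
        abs_of_nonneg (sub_nonneg.2 (pow_le_pow_left₀ (abs_nonneg y) h 2))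
    _ ≤ 4 * (cos (|y|) - cos (|x|)) := sq_sub_sq_le_four_mul_cos_sub_cos (abs_nonneg y) h hx
    _ ≤ 4 * |cos (|x|) - cos (|y|)| := by
        rw [abs_sub_comm]
        gcongr
        exact le_abs_self _

/-- Inequality (4.16): comparison of the squared angle deviation with the potential term. -/
theorem angle_deviation_estimate (δ θ : ℝ) (hδ : δ ∈ Set.Ioo (0 : ℝ) 1)
    (hδ' : Real.arccos (1 - δ) < π / 3) (hθ : θ ∈ Set.Icc (-(π / 3)) (π / 3)) :
    |θ ^ 2 - Real.arccos (1 - δ) ^ 2| ≤ 4 * |1 - δ - Real.cos θ| := by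
  have hcos : cos (arccos (1 - δ)) = 1 - δ := cos_arccos (by linarith [hδ.2]) (by linarith [hδ.1])
  have hπ : π / 3 ≤ π / 2 := by linarith [pi_pos]
  have hα : |arccos (1 - δ)| ≤ π / 2 := by
    rw [abs_of_nonneg (arccos_nonneg _)]
    exact hδ'.le.trans hπ
  have hθ' : |θ| ≤ π / 2 := abs_le.2 ⟨by linarith [hθ.1], hθ.2.trans hπ⟩
  have key := abs_sq_sub_sq_le_four_mul_abs_cos_sub_cos hθ' hα
  rwa [hcos, abs_sub_comm (cos θ)] at key
end
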